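/- arXiv:2003.08968 — 2 statements merged into one kernel-verified Lean document; each statement's English description precedes it below -/
import Mathlib

section
/- Let N ≥ 3, n = π(N), and let P(N) ⊂ ℝ^n be the convex hull of the exponent vectors v_1,…,v_N of the numbers 1,…,N. Then P(N) contains no lattice point all of whose coordinates are ≥ 1; in particular, P(N) has no interior lattice points (it is a hollow polytope). -/
open Finset

lemma primes_prod_gt (N : ℕ) (hN : 3 ≤ N) :
    N < ∏ p ∈ (Finset.range (N + 1)).filter Nat.Prime, p := by
  rcases eq_or_lt_of_le hN with h | h
  · subst h; decide
  · obtain ⟨p, hp, hkp, hp2k⟩ := Nat.exists_prime_lt_and_le_two_mul (N / 2) (by omega)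
    have hk2 : 2 ≤ N / 2 := by omega
    have hpN : p ≤ N := le_trans hp2k (by omega)
    have hsub : ({2, p} : Finset ℕ) ⊆ (Finset.range (N + 1)).filter Nat.Prime := by
      intro q hq
      simp only [Finset.mem_insert, Finset.mem_singleton] at hq
      rcases hq with rfl | rfl
      · simp only [Finset.mem_filter, Finset.mem_range]
        exact ⟨by omega, Nat.prime_two⟩
      · simp only [Finset.mem_filter, Finset.mem_range]
        exact ⟨by omega, hp⟩
    have hne : (2 : ℕ) ≠ p := by omega
    have hprod : 2 * p ≤ ∏ q ∈ (Finset.range (N + 1)).filter Nat.Prime, q := by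
      calc 2 * p = ∏ q ∈ ({2, p} : Finset ℕ), q := (Finset.prod_pair (f := fun q => q) hne).symm
        _ ≤ _ := Finset.prod_le_prod_of_subset_of_one_le' hsub
            (fun i hi _ => ((Finset.mem_filter.mp hi).2).one_lt.le)
    omega

lemma log_sum_eq (M : ℕ) (hM : 1 ≤ M) (P : Finset ℕ) (hP : M.primeFactors ⊆ P) :
    ∑ p ∈ P, (M.factorization p : ℝ) * Real.log p = Real.log M := by
  rw [← Finset.sum_subset hP (by
    intro p _ hnp
    have h0 : M.factorization p = 0 := by
      have := Finsupp.notMem_support_iff.mp (by rwa [Nat.support_factorization])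
      exact this
    simp [h0])]
  conv_rhs => rw [← Nat.factorization_prod_pow_eq_self (by omega : M ≠ 0)]
  rw [Finsupp.prod, Nat.support_factorization]
  push_cast
  rw [Real.log_prod]
  · exact Finset.sum_congr rfl fun p hp => by rw [Real.log_pow]
  · intro p hp
    have hp' := Nat.prime_of_mem_primeFactors hp
    exact pow_ne_zero _ (by exact_mod_cast hp'.pos.ne')

theorem polytope_hollow (N : ℕ) (hN : 3 ≤ N) :
    ∀ x ∈ convexHull ℝ
        {y : ((Finset.range (N + 1)).filter Nat.Prime : Finset ℕ) → ℝ |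
          ∃ M : ℕ, 1 ≤ M ∧ M ≤ N ∧
            y = fun p : ↥((Finset.range (N + 1)).filter Nat.Prime) => ((M.factorization (p : ℕ) : ℕ) : ℝ)},
      ¬ ((∀ p, ∃ z : ℤ, x p = (z : ℝ)) ∧ ∀ p, (1 : ℝ) ≤ x p) := by
  set P : Finset ℕ := (Finset.range (N + 1)).filter Nat.Prime with hP
  intro x hx hcon
  obtain ⟨-, hge⟩ := hcon
  -- the convex half-space
  have hlin : IsLinearMap ℝ (fun y : ↥P → ℝ => ∑ p : ↥P, y p * Real.log (p : ℕ)) := by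
    constructor
    · intro a b
      simp only [Pi.add_apply, add_mul, Finset.sum_add_distrib]
    · intro c a
      simp only [Pi.smul_apply, smul_eq_mul, mul_assoc, Finset.mul_sum]
  have hC : Convex ℝ {y : ↥P → ℝ | ∑ p : ↥P, y p * Real.log (p : ℕ) ≤ Real.log N} :=
    convex_halfSpace_le hlin _
  have hsubS : {y : ↥P → ℝ |
      ∃ M : ℕ, 1 ≤ M ∧ M ≤ N ∧
        y = fun p : ↥P => ((M.factorization (p : ℕ) : ℕ) : ℝ)} ⊆
      {y : ↥P → ℝ | ∑ p : ↥P, y p * Real.log (p : ℕ) ≤ Real.log N} := by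
    rintro y ⟨M, hM1, hMN, rfl⟩
    have hfac : M.primeFactors ⊆ P := by
      intro q hq
      have hq' := Nat.prime_of_mem_primeFactors hq
      have hle : q ≤ M := Nat.le_of_dvd (by omega) (Nat.dvd_of_mem_primeFactors hq)
      simp only [hP, Finset.mem_filter, Finset.mem_range]
      exact ⟨by omega, hq'⟩
    have hsum : ∑ p : ↥P, ((M.factorization (p : ℕ) : ℕ) : ℝ) * Real.log (p : ℕ)
        = Real.log M := by
      rw [Finset.sum_coe_sort P (fun p => ((M.factorization p : ℕ) : ℝ) * Real.log p)]
      exact log_sum_eq M hM1 P hfac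
    simp only [Set.mem_setOf_eq, hsum]
    exact Real.log_le_log (by exact_mod_cast hM1) (by exact_mod_cast hMN)
  have hxC := convexHull_min hsubS hC hx
  simp only [Set.mem_setOf_eq] at hxC
  -- lower bound
  have hlogp : ∀ p : ↥P, 0 ≤ Real.log ((p : ℕ) : ℝ) := by
    intro p
    have hp : Nat.Prime (p : ℕ) := (Finset.mem_filter.mp p.2).2
    exact Real.log_nonneg (by exact_mod_cast hp.one_lt.le)
  have hlow : ∑ p : ↥P, Real.log ((p : ℕ) : ℝ) ≤ ∑ p : ↥P, x p * Real.log ((p : ℕ) : ℝ) := by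
    apply Finset.sum_le_sum
    intro p _
    nlinarith [hge p, hlogp p]
  have hsumlog : ∑ p : ↥P, Real.log ((p : ℕ) : ℝ) = Real.log ((∏ p ∈ P, p : ℕ) : ℝ) := by
    rw [Finset.sum_coe_sort P (fun p => Real.log (p : ℝ))]
    push_cast
    rw [Real.log_prod]
    intro p hp
    have hp' := (Finset.mem_filter.mp hp).2
    exact_mod_cast hp'.pos.ne'
  have hgt : Real.log (N : ℝ) < Real.log ((∏ p ∈ P, p : ℕ) : ℝ) := by
    apply Real.log_lt_log (by positivity)
    exact_mod_cast primes_prod_gt N hN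
  linarith [hxC, hlow, hsumlog ▸ hlow]
end

section
/- The convex hull of the exponent vectors of 1, 2, 3, 4, 5, 6, 7 with respect to the primes 2, 3, 5, 7 — namely the points (0,0,0,0), (1,0,0,0), (0,1,0,0), (2,0,0,0), (0,0,1,0), (1,1,0,0), (0,0,0,1) in ℝ^4 — has 4-dimensional Lebesgue volume 1/8. -/
/-!
The polytope is an iterated pyramid of height one: `(0,0,0,1)` is an apex over the polytope
spanned by the other six points, and `(0,0,1,0)` is in turn an apex over the trapezoid spanned by
the exponent vectors of `1, 2, 3, 4, 6`, which has area `3/2`. The slice at height `t` of a pyramid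
over an `n`-dimensional base `B` is `(1 - t) • B`, so by Fubini its volume is
`vol B * ∫₀¹ (1 - t)ⁿ dt = vol B / (n + 1)`. Hence the volume is `3/2 · 1/3 · 1/4 = 1/8`.
-/

open MeasureTheory Set
open scoped Pointwise

theorem volume_eq_lintegral_volume_snoc {n : ℕ} {S : Set (Fin (n + 1) → ℝ)}
    (hS : MeasurableSet S) :
    volume S = ∫⁻ t, volume {y : Fin n → ℝ | Fin.snoc y t ∈ S} := by
  have e := (volume_preserving_piFinSuccAbove (fun _ : Fin (n + 1) => ℝ) (Fin.last n)).symm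
  rw [← e.measure_preimage_equiv, Measure.volume_eq_prod, Measure.prod_apply]
  · simp only [MeasurableEquiv.piFinSuccAbove_symm_apply, Fin.insertNthEquiv, Equiv.coe_fn_mk,
      Fin.insertNth_last']
    rfl
  · exact (MeasurableEquiv.piFinSuccAbove _ _).symm.measurable hS

theorem volume_fin_one_preimage {s : Set ℝ} (hs : MeasurableSet s) :
    volume {y : Fin 1 → ℝ | y 0 ∈ s} = volume s :=
  (volume_preserving_funUnique (Fin 1) ℝ).measure_preimage hs.nullMeasurableSet

theorem Set.Finite.measurableSet_convexHull {E : Type*} [NormedAddCommGroup E] [NormedSpace ℝ E]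
    [MeasurableSpace E] [BorelSpace E] {s : Set E} (hs : s.Finite) :
    MeasurableSet (convexHull ℝ s) :=
  (hs.isCompact_convexHull ℝ).isClosed.measurableSet

theorem lintegral_Icc_one_sub_pow (n : ℕ) :
    ∫⁻ t in Icc (0 : ℝ) 1, ENNReal.ofReal ((1 - t) ^ n) = (n + 1 : ENNReal)⁻¹ := by
  have h : ∫ t in (0 : ℝ)..1, (1 - t) ^ n = 1 / (n + 1) := by
    simp [intervalIntegral.integral_comp_sub_left (fun t : ℝ => t ^ n)]
  rw [← ofReal_integral_eq_lintegral_ofReal, integral_Icc_eq_integral_Ioc,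
    ← intervalIntegral.integral_of_le zero_le_one, h, one_div,
    ENNReal.ofReal_inv_of_pos (by positivity)]
  · norm_cast
  · exact (by fun_prop : Continuous fun t : ℝ => (1 - t) ^ n).integrableOn_Icc
  · filter_upwards [ae_restrict_mem measurableSet_Icc] with t ht
    exact pow_nonneg (sub_nonneg.2 ht.2) n

/-- The pyramid of height one over `B × {0}` with apex `Fin.snoc 0 1`. -/
def pyramid {n : ℕ} (B : Set (Fin n → ℝ)) : Set (Fin (n + 1) → ℝ) :=
  {z | z (Fin.last n) ∈ Icc 0 1 ∧ (Fin.init z : Fin n → ℝ) ∈ (1 - z (Fin.last n)) • B}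

theorem snoc_mem_pyramid {n : ℕ} {B : Set (Fin n → ℝ)} {y : Fin n → ℝ} {t : ℝ} :
    Fin.snoc y t ∈ pyramid B ↔ t ∈ Icc 0 1 ∧ y ∈ (1 - t) • B := by
  simp only [pyramid, mem_ofPred_eq, Fin.snoc_last, Fin.init_snoc]

theorem measurableSet_pyramid {n : ℕ} {B : Set (Fin n → ℝ)} (hB : MeasurableSet B) :
    MeasurableSet (pyramid B) := by
  have hlast : Measurable fun z : Fin (n + 1) → ℝ => z (Fin.last n) := measurable_pi_apply _
  have hinit : Measurable fun z : Fin (n + 1) → ℝ => (Fin.init z : Fin n → ℝ) := by fun_prop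
  -- away from the apex, membership in `(1 - t) • B` is membership of a rescaled point in `B`
  have hsplit : pyramid B =
      {z | z (Fin.last n) ∈ Ico 0 1 ∧ (1 - z (Fin.last n))⁻¹ • (Fin.init z : Fin n → ℝ) ∈ B} ∪
      {z | z (Fin.last n) = 1 ∧ (Fin.init z : Fin n → ℝ) ∈ (0 : ℝ) • B} := by
    ext z
    by_cases h1 : z (Fin.last n) = 1
    · simp [pyramid, h1]
    · rw [pyramid, mem_ofPred, mem_smul_set_iff_inv_smul_mem₀ (sub_ne_zero.2 (Ne.symm h1))]
      simp [h1, lt_iff_le_and_ne]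
  rw [hsplit]
  refine .union ((hlast measurableSet_Ico).inter ?_) ((hlast (measurableSet_singleton 1)).inter ?_)
  · exact hB.preimage ((hlast.const_sub 1).inv.smul hinit)
  · exact (subsingleton_zero_smul_set B).measurableSet.preimage hinit

theorem volume_pyramid {n : ℕ} {B : Set (Fin n → ℝ)} (hB : MeasurableSet B) :
    volume (pyramid B) = volume B / (n + 1) := by
  have hslice : ∀ t, volume {y : Fin n → ℝ | Fin.snoc y t ∈ pyramid B} =
      (Icc 0 1).indicator (fun t => ENNReal.ofReal ((1 - t) ^ n) * volume B) t := by
    intro t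
    by_cases ht : t ∈ Icc 0 1
    · simp only [snoc_mem_pyramid, ht, true_and, ofPred_mem_eq, indicator_of_mem,
        Measure.addHaar_smul, Module.finrank_fin_fun, abs_pow, abs_of_nonneg (sub_nonneg.2 ht.2)]
    · simp [snoc_mem_pyramid, ht]
  rw [volume_eq_lintegral_volume_snoc (measurableSet_pyramid hB)]
  simp_rw [hslice]
  rw [lintegral_indicator measurableSet_Icc, lintegral_mul_const _ (by fun_prop),
    lintegral_Icc_one_sub_pow, ENNReal.div_eq_inv_mul]

theorem smul_snoc_add_smul_snoc {n : ℕ} (a b : ℝ) (y : Fin n → ℝ) :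
    a • (Fin.snoc 0 1 : Fin (n + 1) → ℝ) + b • (Fin.snoc y 0 : Fin (n + 1) → ℝ) =
      Fin.snoc (b • y) a := by
  ext i
  induction i using Fin.lastCases <;> simp

theorem isLinearMap_snoc_zero (n : ℕ) :
    IsLinearMap ℝ fun y : Fin n → ℝ => (Fin.snoc y 0 : Fin (n + 1) → ℝ) := by
  refine ⟨fun y y' => ?_, fun c y => ?_⟩ <;>
  · ext i
    induction i using Fin.lastCases <;> simp

theorem convexHull_insert_snoc_eq_pyramid {n : ℕ} {s : Set (Fin n → ℝ)} (hs : s.Nonempty) :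
    convexHull ℝ (insert (Fin.snoc 0 1) ((fun y => Fin.snoc y 0) '' s)) =
      pyramid (convexHull ℝ s) := by
  ext z
  rw [convexHull_insert (hs.image _), ← (isLinearMap_snoc_zero n).image_convexHull,
    mem_convexJoin]
  simp only [mem_singleton_iff, exists_eq_left, exists_mem_image, segment, mem_ofPred_eq,
    smul_snoc_add_smul_snoc]
  constructor
  · rintro ⟨y, hy, a, b, ha, hb, hab, rfl⟩
    rw [snoc_mem_pyramid, ← eq_sub_of_add_eq' hab]
    exact ⟨⟨ha, by linarith⟩, smul_mem_smul_set hy⟩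
  · rintro ⟨ht, y, hy, hyz : (1 - z (Fin.last n)) • y = Fin.init z⟩
    refine ⟨y, hy, z (Fin.last n), 1 - z (Fin.last n), ht.1, sub_nonneg.2 ht.2, by ring, ?_⟩
    rw [hyz, Fin.snoc_init_self]

theorem convexHull_trapezoid :
    convexHull ℝ ({![0, 0], ![1, 0], ![0, 1], ![2, 0], ![1, 1]} : Set (Fin 2 → ℝ)) =
      {x | x 1 ∈ Icc 0 1 ∧ x 0 ∈ Icc 0 (2 - x 1)} := by
  refine (convexHull_min ?_ ?_).antisymm fun x ⟨⟨ht0, ht1⟩, hu0, hu2⟩ => ?_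
  · rintro x (rfl | rfl | rfl | rfl | rfl) <;> norm_num
  · rintro x ⟨⟨hx0, hx1⟩, hx2, hx3⟩ y ⟨⟨hy0, hy1⟩, hy2, hy3⟩ a b ha hb hab
    simp only [mem_ofPred_eq, Pi.add_apply, Pi.smul_apply, smul_eq_mul, mem_Icc]
    refine ⟨⟨by positivity, by nlinarith⟩, by positivity, by nlinarith⟩
  -- weights of `x` on `(0,0), (2,0), (0,1), (1,1)`; `l` is the least weight on `(1,1)` keeping
  -- the weight on `(0,0)` nonnegative
  set l := max 0 (x 0 + 2 * x 1 - 2)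
  have hl0 : 0 ≤ l := le_max_left _ _
  have hl : x 0 + 2 * x 1 - 2 ≤ l := le_max_right _ _
  have hlu : l ≤ x 0 := max_le hu0 (by linarith)
  have hlt : l ≤ x 1 := max_le ht0 (by linarith)
  have hmem := (convex_convexHull ℝ
      ({![0, 0], ![1, 0], ![0, 1], ![2, 0], ![1, 1]} : Set (Fin 2 → ℝ))).sum_mem
    (t := Finset.univ) (w := ![1 - x 1 - (x 0 - l) / 2, (x 0 - l) / 2, x 1 - l, l])
    (z := ![![0, 0], ![2, 0], ![0, 1], ![1, 1]]) ?_ ?_ ?_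
  · convert hmem using 1
    ext i
    fin_cases i <;> simp [Fin.sum_univ_four]
  · intro i _
    fin_cases i <;> simp <;> linarith
  · simp [Fin.sum_univ_four]
  · intro i _
    fin_cases i <;> apply subset_convexHull <;> simp

theorem volume_convexHull_trapezoid :
    volume (convexHull ℝ ({![0, 0], ![1, 0], ![0, 1], ![2, 0], ![1, 1]} : Set (Fin 2 → ℝ))) =
      ENNReal.ofReal (3 / 2) := by
  rw [volume_eq_lintegral_volume_snoc (toFinite _).measurableSet_convexHull,
    convexHull_trapezoid]
  have hslice : ∀ t : ℝ, volume {y : Fin 1 → ℝ | Fin.snoc y t ∈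
      ({x | x 1 ∈ Icc 0 1 ∧ x 0 ∈ Icc 0 (2 - x 1)} : Set (Fin 2 → ℝ))} =
      (Icc 0 1).indicator (fun t => ENNReal.ofReal (2 - t)) t := by
    intro t
    have hlast : ∀ y : Fin 1 → ℝ, (Fin.snoc y t : Fin 2 → ℝ) 1 = t := fun y => Fin.snoc_last _ _
    by_cases ht : t ∈ Icc 0 1
    · rw [indicator_of_mem ht, ← sub_zero (2 - t), ← Real.volume_Icc,
        ← volume_fin_one_preimage measurableSet_Icc]
      congr 1 with y
      simp [hlast, ht.1, ht.2]
    · rw [indicator_of_notMem ht]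
      simp [hlast, show ¬(0 ≤ t ∧ t ≤ 1) from ht]
  simp_rw [hslice]
  rw [lintegral_indicator measurableSet_Icc, ← ofReal_integral_eq_lintegral_ofReal,
    integral_Icc_eq_integral_Ioc, ← intervalIntegral.integral_of_le zero_le_one,
    intervalIntegral.integral_sub intervalIntegrable_const intervalIntegral.intervalIntegrable_id]
  · norm_num
  · exact (by fun_prop : Continuous fun t : ℝ => 2 - t).integrableOn_Icc
  · filter_upwards [ae_restrict_mem measurableSet_Icc] with t ht
    exact sub_nonneg.2 (ht.2.trans one_le_two)

theorem volume_polytope_seven :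
    volume (convexHull ℝ
        ({![0, 0, 0, 0], ![1, 0, 0, 0], ![0, 1, 0, 0], ![2, 0, 0, 0],
          ![0, 0, 1, 0], ![1, 1, 0, 0], ![0, 0, 0, 1]} :
          Set (Fin 4 → ℝ))) = 1 / 8 := by
  set T : Set (Fin 2 → ℝ) := {![0, 0], ![1, 0], ![0, 1], ![2, 0], ![1, 1]}
  have hvertices : ({![0, 0, 0, 0], ![1, 0, 0, 0], ![0, 1, 0, 0], ![2, 0, 0, 0],
      ![0, 0, 1, 0], ![1, 1, 0, 0], ![0, 0, 0, 1]} : Set (Fin 4 → ℝ)) =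
      insert (Fin.snoc 0 1) ((fun y => Fin.snoc y 0) ''
        insert (Fin.snoc 0 1) ((fun y => Fin.snoc y 0) '' T)) := by
    have h3 : (Fin.snoc 0 1 : Fin 3 → ℝ) = ![0, 0, 1] := by ext i; fin_cases i <;> rfl
    have h4 : (Fin.snoc 0 1 : Fin 4 → ℝ) = ![0, 0, 0, 1] := by ext i; fin_cases i <;> rfl
    ext x
    simp only [T, image_insert_eq, image_singleton, h3, h4, mem_insert_iff, mem_singleton_iff,
      Matrix.Fin.snoc_vecCons, Matrix.Fin.snoc_vecEmpty]
    tauto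
  have hT : MeasurableSet (convexHull ℝ T) := (toFinite T).measurableSet_convexHull
  rw [hvertices, convexHull_insert_snoc_eq_pyramid (by simp [T]),
    convexHull_insert_snoc_eq_pyramid (by simp [T]), volume_pyramid (measurableSet_pyramid hT),
    volume_pyramid hT, volume_convexHull_trapezoid,
    ← ENNReal.toReal_eq_toReal_iff' (by simp [ENNReal.div_eq_top]) (by simp)]
  norm_num
end
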